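/- Let A be a based quasi-hereditary superalgebra over a field F with heredity data (I,X,Y), let V be a finitely generated A-supermodule, let v_1,…,v_t ∈ V be homogeneous elements, and set V_0 := 0 and V_s := A⟨v_1,…,v_s⟩ for s=1,…,t. Suppose: (1) V_t = V; (2) for each s=1,…,t there exists i_s ∈ I such that e_{i_s}v_s − v_s ∈ V_{s−1} and yv_s ∈ V_{s−1} for all y ∈ Y∖{e_{i_s}}; (3) dim V = Σ_{s=1}^t dim Δ(i_s). Then V_s/V_{s−1} is evenly isomorphic to Π^{|v_s|}Δ(i_s) for all s=1,…,t; in particular V has a standard filtration. -/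

import Mathlib

/-!
STATEMENT 3: criterion for a standard filtration (Corollary `FiltCriteria`).
-/

open scoped Classical

/-- Heredity data `(I, X, Y)` on a `ℤ/2`-graded `k`-superalgebra `A` (with grading `𝒜`),
making `A` a based quasi-hereditary superalgebra (Kleshchev–Muth).  The sets `X i`, `Y i`
consist of homogeneous elements, with distinguished initial elements `e i ∈ X i ∩ Y i`;
`B = {x * y | i ∈ I, x ∈ X i, y ∈ Y i}` is a `k`-basis of `A`; left/right multiplication is
triangular modulo `A^{> i} = span {x * y | j > i, x ∈ X j, y ∈ Y j}`; and the idempotent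
axioms (c) hold. -/
structure HeredityData (k A : Type) [CommRing k] [Ring A] [Algebra k A]
    (𝒜 : ZMod 2 → Submodule k A)
    (I : Type) [Fintype I] [PartialOrder I] : Type where
  X : I → Finset A
  Y : I → Finset A
  e : I → A
  e_mem_X : ∀ i, e i ∈ X i
  e_mem_Y : ∀ i, e i ∈ Y i
  homog_X : ∀ i, ∀ x ∈ X i, ∃ ε : ZMod 2, x ∈ 𝒜 ε
  homog_Y : ∀ i, ∀ y ∈ Y i, ∃ ε : ZMod 2, y ∈ 𝒜 ε
  /-- (a): the products `x * y` form a `k`-basis of `A`: they are linearly independent … -/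
  basis_indep : LinearIndependent k
    (fun p : Σ i : I, {q : A × A // q ∈ X i ×ˢ Y i} => p.2.1.1 * p.2.1.2)
  /-- (a): … and they span `A`. -/
  basis_span :
    Submodule.span k {a : A | ∃ i, ∃ x ∈ X i, ∃ y ∈ Y i, a = x * y} = ⊤
  /-- (b): `a * x` is, modulo `A^{> i}`, a `k`-linear combination of elements of `X i`. -/
  left_coeffs : ∀ i, ∀ x ∈ X i, ∀ a : A,
    a * x ∈ Submodule.span k ((X i : Set A) ∪
      {b : A | ∃ j, i < j ∧ ∃ x' ∈ X j, ∃ y' ∈ Y j, b = x' * y'})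
  /-- (b): `y * a` is, modulo `A^{> i}`, a `k`-linear combination of elements of `Y i`. -/
  right_coeffs : ∀ i, ∀ y ∈ Y i, ∀ a : A,
    y * a ∈ Submodule.span k ((Y i : Set A) ∪
      {b : A | ∃ j, i < j ∧ ∃ x' ∈ X j, ∃ y' ∈ Y j, b = x' * y'})
  /-- (c): `x * e i = x`. -/
  x_mul_e : ∀ i, ∀ x ∈ X i, x * e i = x
  /-- (c): `e i * x = δ_{x, e i} x`. -/
  e_mul_x : ∀ i, ∀ x ∈ X i, e i * x = if x = e i then x else 0
  /-- (c): `e i * y = y`. -/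
  e_mul_y : ∀ i, ∀ y ∈ Y i, e i * y = y
  /-- (c): `y * e i = δ_{y, e i} y`. -/
  y_mul_e : ∀ i, ∀ y ∈ Y i, y * e i = if y = e i then y else 0
  /-- (c): `e j * x = x` or `0`. -/
  e_mul_x' : ∀ i j, ∀ x ∈ X i, e j * x = x ∨ e j * x = 0
  /-- (c): `y * e j = y` or `0`. -/
  y_mul_e' : ∀ i j, ∀ y ∈ Y i, y * e j = y ∨ y * e j = 0

variable (F A : Type) [Field F] [Ring A] [Algebra F A]
  (𝒜 : ZMod 2 → Submodule F A)
  (I : Type) [Fintype I] [PartialOrder I]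

/-- The (left ideal) `A^{> i}`, generated by the products `x * y` with `x ∈ X j`,
`y ∈ Y j`, `j > i` (it is in fact a two-sided ideal of `A`). -/
def hgtIdeal (H : HeredityData F A 𝒜 I) (i : I) : Submodule A A :=
  Submodule.span A {b : A | ∃ j, i < j ∧ ∃ x ∈ H.X j, ∃ y ∈ H.Y j, b = x * y}

/-- The quotient superalgebra `Ã = A / A^{> i}` as a left `A`-module. -/
abbrev DeltaQuot (H : HeredityData F A 𝒜 I) (i : I) : Type :=
  A ⧸ hgtIdeal F A 𝒜 I H i

/-- The standard module `Δ(i) = Ã ẽ_i = A · (e i + A^{> i}) ⊆ A / A^{> i}`. -/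
def stdDelta (H : HeredityData F A 𝒜 I) (i : I) :
    Submodule A (DeltaQuot F A 𝒜 I H i) :=
  Submodule.span A {Submodule.Quotient.mk (H.e i)}

/-- The induced `ℤ/2`-grading on the standard module `Δ(i)`. -/
def grDelta (H : HeredityData F A 𝒜 I) (i : I) (ε : ZMod 2) :
    Set ↥(stdDelta F A 𝒜 I H i) :=
  {q | ∃ a ∈ 𝒜 ε, (Submodule.Quotient.mk a : DeltaQuot F A 𝒜 I H i) = (q : DeltaQuot F A 𝒜 I H i)}

/-- A homogeneous `A`-supermodule homomorphism of parity `δ`:  an `F`-linear map `f`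
shifting the gradings by `δ` and satisfying `f (a • x) = (-1)^{|f||a|} a • f x` for
homogeneous `a`.  (An even isomorphism `V ≅ Π^δ W` is the same thing as a bijective
such map `V → W` of parity `δ`.) -/
def IsSuperHom (V W : Type) [AddCommGroup V] [Module F V] [Module A V]
    [AddCommGroup W] [Module F W] [Module A W]
    (gV : ZMod 2 → Set V) (gW : ZMod 2 → Set W) (δ : ZMod 2) (f : V →ₗ[F] W) : Prop :=
  (∀ ε : ZMod 2, ∀ x ∈ gV ε, f x ∈ gW (ε + δ)) ∧
  ∀ ε : ZMod 2, ∀ a ∈ 𝒜 ε, ∀ x : V,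
    f (a • x) = (if ε * δ = 1 then -(a • f x) else a • f x)

/-!
Condition (2) says that `v_s` is fixed by `e_{i_s}` and killed by every `y ∈ Y(j)` with
`j > i_s` modulo `V_{s-1}`, because such a `y` is never `e_{i_s}`. Hence `A^{>i_s}` annihilates
`v_s + V_{s-1}` and `a ẽ_{i_s} ↦ (-1)^{|a||v_s|} a v_s` is a well-defined surjection of parity
`|v_s|` from `Δ(i_s)` onto `V_s / V_{s-1}`. So `dim V_s / V_{s-1} ≤ dim Δ(i_s)` for every `s`, while
both sides add up to `dim V` by (1) and (3); thus all these surjections are bijections.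
-/

open Module

def paritySign (δ ε : ZMod 2) : ℤ := if ε * δ = 1 then -1 else 1

lemma paritySign_add (δ ε η : ZMod 2) :
    paritySign δ (ε + η) = paritySign δ ε * paritySign δ η := by
  revert δ ε η; decide

lemma paritySign_mul_self (δ ε : ZMod 2) : paritySign δ ε * paritySign δ ε = 1 := by
  unfold paritySign; split <;> rfl

lemma paritySign_smul {M : Type*} [AddCommGroup M] (δ ε : ZMod 2) (x : M) :
    paritySign δ ε • x = if ε * δ = 1 then -x else x := by
  unfold paritySign; split <;> simp

section ParityTwist

variable {F A} [GradedAlgebra 𝒜]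

def parityTwist (δ : ZMod 2) : A →ₗ[F] A :=
  ∑ ε : ZMod 2, paritySign δ ε • GradedAlgebra.proj 𝒜 ε

lemma parityTwist_of_mem {δ ε : ZMod 2} {a : A} (h : a ∈ 𝒜 ε) :
    parityTwist 𝒜 δ a = paritySign δ ε • a := by
  rw [parityTwist, LinearMap.sum_apply, Finset.sum_eq_single ε]
  · rw [LinearMap.smul_apply, GradedAlgebra.proj_apply, DirectSum.decompose_of_mem_same 𝒜 h]
  · intro η _ hη
    rw [LinearMap.smul_apply, GradedAlgebra.proj_apply,
      DirectSum.decompose_of_mem_ne 𝒜 h hη.symm, smul_zero]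
  · simp

lemma parityTwist_mul (δ : ZMod 2) (a b : A) :
    parityTwist 𝒜 δ (a * b) = parityTwist 𝒜 δ a * parityTwist 𝒜 δ b := by
  induction a using DirectSum.Decomposition.inductionOn 𝒜 with
  | zero => simp
  | add a₁ a₂ h₁ h₂ => rw [add_mul, map_add, map_add, h₁, h₂, add_mul]
  | @homogeneous ε a =>
    induction b using DirectSum.Decomposition.inductionOn 𝒜 with
    | zero => simp
    | add b₁ b₂ h₁ h₂ => rw [mul_add, map_add, map_add, h₁, h₂, mul_add]
    | @homogeneous η b =>
      rw [parityTwist_of_mem 𝒜 (SetLike.mul_mem_graded a.2 b.2), parityTwist_of_mem 𝒜 a.2,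
        parityTwist_of_mem 𝒜 b.2, paritySign_add, smul_mul_smul_comm]

lemma parityTwist_parityTwist (δ : ZMod 2) (a : A) :
    parityTwist 𝒜 δ (parityTwist 𝒜 δ a) = a := by
  induction a using DirectSum.Decomposition.inductionOn 𝒜 with
  | zero => simp
  | add a₁ a₂ h₁ h₂ => rw [map_add, map_add, h₁, h₂]
  | @homogeneous ε a =>
    rw [parityTwist_of_mem 𝒜 a.2, map_zsmul, parityTwist_of_mem 𝒜 a.2, smul_smul,
      paritySign_mul_self, one_smul]

end ParityTwist

section TwistedOrbitMap

variable {F A} [GradedAlgebra 𝒜] {M : Type} [AddCommGroup M] [Module A M] [Module F M]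
  [IsScalarTower F A M] (δ : ZMod 2) (m : M) (J : Submodule A A)
  (hJ : ∀ a ∈ J, parityTwist 𝒜 δ a • m = 0)

def twistedOrbitMap : (A ⧸ J) →ₗ[F] M :=
  (J.restrictScalars F).liftQ
    ((LinearMap.toSpanSingleton A M m).restrictScalars F ∘ₗ parityTwist 𝒜 δ) hJ ∘ₗ
    (Submodule.Quotient.restrictScalarsEquiv F J).symm.toLinearMap

@[simp]
lemma twistedOrbitMap_mk (a : A) :
    twistedOrbitMap 𝒜 δ m J hJ (Submodule.Quotient.mk a) = parityTwist 𝒜 δ a • m :=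
  rfl

lemma twistedOrbitMap_smul {ε : ZMod 2} {a : A} (ha : a ∈ 𝒜 ε) (x : A ⧸ J) :
    twistedOrbitMap 𝒜 δ m J hJ (a • x) = paritySign δ ε • a • twistedOrbitMap 𝒜 δ m J hJ x := by
  induction x using Submodule.Quotient.induction_on with
  | H b =>
    rw [← Submodule.Quotient.mk_smul, twistedOrbitMap_mk, twistedOrbitMap_mk, smul_eq_mul,
      parityTwist_mul, parityTwist_of_mem 𝒜 ha, mul_smul, smul_assoc]

lemma twistedOrbitMap_mk_mul {ε : ZMod 2} {e : A} (he : e ∈ 𝒜 ε) (hem : e • m = m) (a : A) :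
    twistedOrbitMap 𝒜 δ m J hJ
      (Submodule.Quotient.mk (paritySign δ ε • parityTwist 𝒜 δ a * e)) = a • m := by
  rw [twistedOrbitMap_mk, parityTwist_mul, map_zsmul, parityTwist_parityTwist,
    parityTwist_of_mem 𝒜 he, smul_mul_smul_comm, paritySign_mul_self, one_smul, mul_smul, hem]

end TwistedOrbitMap

instance Submodule.finiteDimensional_of_isScalarTower {M : Type} [AddCommGroup M] [Module A M]
    [Module F M] [IsScalarTower F A M] [FiniteDimensional F M] (N : Submodule A M) :
    FiniteDimensional F N :=
  FiniteDimensional.finiteDimensional_submodule (N.restrictScalars F)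

lemma Submodule.span_image_lt_succ {R V : Type*} [Semiring R] [AddCommMonoid V] [Module R V]
    {t : ℕ} (v : Fin t → V) (s : Fin t) :
    span R (v '' {r | (r : ℕ) < s + 1}) = span R (v '' {r | (r : ℕ) < s}) ⊔ span R {v s} := by
  have : {r : Fin t | (r : ℕ) < s + 1} = {r : Fin t | (r : ℕ) < s} ∪ {s} := by
    ext r
    simp only [Set.mem_ofPred_eq, Set.mem_union, Set.mem_singleton_iff, Fin.ext_iff]
    omega
  rw [this, Set.image_union, Set.image_singleton, Submodule.span_union]

lemma Submodule.exists_smul_mk_eq_of_le_sup_span {R V : Type*} [Ring R] [AddCommGroup V]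
    [Module R V] {W W' : Submodule R V} {w : V} (hw : w ∈ W') (hW' : W' ≤ W ⊔ span R {w})
    (q : W' ⧸ W.comap W'.subtype) : ∃ a : R, a • Submodule.Quotient.mk ⟨w, hw⟩ = q := by
  obtain ⟨z, rfl⟩ := Submodule.Quotient.mk_surjective _ q
  obtain ⟨u, hu, y, hy, hz⟩ := Submodule.mem_sup.1 (hW' z.2)
  obtain ⟨a, rfl⟩ := Submodule.mem_span_singleton.1 hy
  refine ⟨a, ?_⟩
  rw [← Submodule.Quotient.mk_smul, Submodule.Quotient.eq, Submodule.mem_comap]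
  have : a • w - (z : V) = -u := by rw [← hz]; abel
  simpa [this] using hu

section Dimension

variable {A} {V : Type} [AddCommGroup V] [Module A V] [Module F V] [IsScalarTower F A V]
  [FiniteDimensional F V]

lemma Submodule.finrank_subquotient_add_finrank {W W' : Submodule A V} (h : W ≤ W') :
    finrank F (W' ⧸ W.comap W'.subtype) + finrank F W = finrank F W' := by
  rw [← ((Submodule.comapSubtypeEquivOfLe h).restrictScalars F).finrank_eq]
  exact ((W.comap W'.subtype).restrictScalars F).finrank_quotient_add_finrank

lemma Submodule.sum_finrank_subquotient_eq_finrank (W : ℕ → Submodule A V)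
    (hW : ∀ n, W n ≤ W (n + 1)) (h0 : W 0 = ⊥) (t : ℕ) :
    ∑ s : Fin t, finrank F (W (s + 1) ⧸ (W s).comap (W (s + 1)).subtype) = finrank F (W t) := by
  rw [Fin.sum_univ_eq_sum_range (fun n => finrank F (W (n + 1) ⧸ (W n).comap (W (n + 1)).subtype))]
  induction t with
  | zero => rw [h0, Finset.sum_range_zero, finrank_zero_of_subsingleton]
  | succ t ih =>
    rw [Finset.sum_range_succ, ih, add_comm, Submodule.finrank_subquotient_add_finrank F (hW t)]

end Dimension

variable {F} in
lemma bijective_of_surjective_of_sum_finrank_eq {ι : Type*} [Fintype ι] {D Q : ι → Type*}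
    [∀ s, AddCommGroup (D s)] [∀ s, Module F (D s)] [∀ s, FiniteDimensional F (D s)]
    [∀ s, AddCommGroup (Q s)] [∀ s, Module F (Q s)] (f : ∀ s, D s →ₗ[F] Q s)
    (hf : ∀ s, Function.Surjective (f s))
    (h : ∑ s, finrank F (Q s) = ∑ s, finrank F (D s)) (s : ι) : Function.Bijective (f s) := by
  have hle : ∀ s, finrank F (Q s) ≤ finrank F (D s) := fun s =>
    (LinearMap.range_eq_top.2 (hf s) ▸ finrank_top F (Q s)).symm ▸ (f s).finrank_range_le
  have heq := (Finset.sum_eq_sum_iff_of_le fun s _ => hle s).1 h s (Finset.mem_univ s)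
  have := Module.Finite.of_surjective (f s) (hf s)
  exact ⟨(LinearMap.injective_iff_surjective_of_finrank_eq_finrank heq.symm).2 (hf s), hf s⟩

namespace HeredityData

variable {F A 𝒜 I} (H : HeredityData F A 𝒜 I)

noncomputable def basis : Module.Basis (Σ i : I, {q : A × A // q ∈ H.X i ×ˢ H.Y i}) F A :=
  .mk H.basis_indep <| by
    rw [← H.basis_span]
    refine Submodule.span_mono ?_
    rintro _ ⟨i, x, hx, y, hy, rfl⟩
    exact ⟨⟨i, (x, y), Finset.mem_product.2 ⟨hx, hy⟩⟩, rfl⟩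

lemma finiteDimensional (H : HeredityData F A 𝒜 I) : FiniteDimensional F A :=
  .of_basis H.basis

-- Otherwise `e i * e i = e i = e j * e i` would be a coincidence of two distinct basis products.
lemma ne_e_of_mem_Y {i j : I} (hij : i ≠ j) {y : A} (hy : y ∈ H.Y j) : y ≠ H.e i := by
  rintro rfl
  have hii : (H.e i, H.e i) ∈ H.X i ×ˢ H.Y i := Finset.mem_product.2 ⟨H.e_mem_X i, H.e_mem_Y i⟩
  have hji : (H.e j, H.e i) ∈ H.X j ×ˢ H.Y j := Finset.mem_product.2 ⟨H.e_mem_X j, hy⟩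
  have := H.basis_indep.injective (a₁ := ⟨i, _, hii⟩) (a₂ := ⟨j, _, hji⟩) <| by
    dsimp only
    rw [H.x_mul_e i _ (H.e_mem_X i), H.e_mul_y j _ hy]
  exact hij (congrArg Sigma.fst this)

variable [GradedAlgebra 𝒜] {M : Type} [AddCommGroup M] [Module A M]

lemma parityTwist_smul_eq_zero_of_mem_hgtIdeal (δ : ZMod 2) {i : I} {m : M}
    (hm : ∀ j, i < j → ∀ y ∈ H.Y j, y • m = 0) {a : A} (ha : a ∈ hgtIdeal F A 𝒜 I H i) :
    parityTwist 𝒜 δ a • m = 0 := by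
  induction ha using Submodule.span_induction with
  | mem b hb =>
    obtain ⟨j, hij, x, hx, y, hy, rfl⟩ := hb
    obtain ⟨εx, hεx⟩ := H.homog_X j x hx
    obtain ⟨εy, hεy⟩ := H.homog_Y j y hy
    rw [parityTwist_of_mem 𝒜 (SetLike.mul_mem_graded hεx hεy), smul_assoc, mul_smul,
      hm j hij y hy, smul_zero, smul_zero]
  | zero => simp
  | add b c _ _ hb hc => rw [map_add, add_smul, hb, hc, add_zero]
  | smul r b _ hb => rw [smul_eq_mul, parityTwist_mul, mul_smul, hb, smul_zero]

lemma exists_surjective_isSuperHom_stdDelta {V : Type} [AddCommGroup V] [Module F V] [Module A V]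
    [IsScalarTower F A V] (𝒱 : ZMod 2 → Submodule F V)
    (hact : ∀ (ε δ : ZMod 2) (a : A) (x : V), a ∈ 𝒜 ε → x ∈ 𝒱 δ → a • x ∈ 𝒱 (ε + δ))
    {W W' : Submodule A V} {w : V} {δ : ZMod 2} (hw : w ∈ 𝒱 δ) (hwW' : w ∈ W')
    (hW' : W' ≤ W ⊔ Submodule.span A {w}) {i : I} (he : H.e i • w - w ∈ W)
    (hY : ∀ j, ∀ y ∈ H.Y j, y ≠ H.e i → y • w ∈ W) :
    ∃ f : ↥(stdDelta F A 𝒜 I H i) →ₗ[F] (W' ⧸ W.comap W'.subtype),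
      Function.Surjective f ∧
      IsSuperHom F A 𝒜 ↥(stdDelta F A 𝒜 I H i) (W' ⧸ W.comap W'.subtype)
        (grDelta F A 𝒜 I H i)
        (fun ε => {q | ∃ z : V, z ∈ 𝒱 ε ∧ ∃ hz : z ∈ W',
          Submodule.Quotient.mk (⟨z, hz⟩ : W') = q})
        δ f := by
  set m : W' ⧸ W.comap W'.subtype := Submodule.Quotient.mk ⟨w, hwW'⟩
  have hJ : ∀ a ∈ hgtIdeal F A 𝒜 I H i, parityTwist 𝒜 δ a • m = 0 := fun a =>
    H.parityTwist_smul_eq_zero_of_mem_hgtIdeal δ fun j hij y hy =>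
      (Submodule.Quotient.mk_eq_zero (W.comap W'.subtype) (x := y • ⟨w, hwW'⟩)).2
        (hY j y hy (H.ne_e_of_mem_Y hij.ne hy))
  have hem : H.e i • m = m := by
    rw [← sub_eq_zero, ← Submodule.Quotient.mk_smul, ← Submodule.Quotient.mk_sub,
      Submodule.Quotient.mk_eq_zero]
    exact he
  set g := twistedOrbitMap 𝒜 δ m (hgtIdeal F A 𝒜 I H i) hJ
  refine ⟨g ∘ₗ (stdDelta F A 𝒜 I H i).subtype.restrictScalars F, ?_, ?_, ?_⟩
  · intro q
    obtain ⟨a, rfl⟩ := Submodule.exists_smul_mk_eq_of_le_sup_span hwW' hW' q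
    obtain ⟨ε, hε⟩ := H.homog_X i _ (H.e_mem_X i)
    refine ⟨⟨Submodule.Quotient.mk (paritySign δ ε • parityTwist 𝒜 δ a * H.e i), ?_⟩,
      twistedOrbitMap_mk_mul 𝒜 δ m _ hJ hε hem a⟩
    rw [← smul_eq_mul, Submodule.Quotient.mk_smul]
    exact Submodule.smul_mem _ _ (Submodule.mem_span_singleton_self _)
  · rintro ε x ⟨a, ha, hax⟩
    refine ⟨(paritySign δ ε • a) • w, hact ε δ _ w (zsmul_mem ha _) hw,
      W'.smul_mem _ hwW', ?_⟩
    rw [LinearMap.comp_apply, LinearMap.restrictScalars_apply, Submodule.subtype_apply, ← hax,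
      twistedOrbitMap_mk, parityTwist_of_mem 𝒜 ha]
    rfl
  · intro ε a ha x
    exact (twistedOrbitMap_smul 𝒜 δ m _ hJ ha x).trans (paritySign_smul δ ε _)

end HeredityData

theorem stmt3
    [GradedAlgebra 𝒜]
    (H : HeredityData F A 𝒜 I)
    (V : Type) [AddCommGroup V] [Module F V] [Module A V] [IsScalarTower F A V]
    [FiniteDimensional F V]
    (𝒱 : ZMod 2 → Submodule F V)
    (hact : ∀ (ε δ : ZMod 2) (a : A) (x : V), a ∈ 𝒜 ε → x ∈ 𝒱 δ → a • x ∈ 𝒱 (ε + δ))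
    (t : ℕ) (v : Fin t → V) (pv : Fin t → ZMod 2)
    (hv_homog : ∀ s, v s ∈ 𝒱 (pv s))
    (Vs : ℕ → Submodule A V)
    (hVs : ∀ s : ℕ, Vs s = Submodule.span A (v '' {r : Fin t | (r : ℕ) < s}))
    (is : Fin t → I)
    (h1 : Vs t = ⊤)
    (h2 : ∀ s : Fin t, H.e (is s) • v s - v s ∈ Vs s ∧
      ∀ j, ∀ y ∈ H.Y j, y ≠ H.e (is s) → y • v s ∈ Vs s)
    (h3 : Module.finrank F V = ∑ s : Fin t, Module.finrank F ↥(stdDelta F A 𝒜 I H (is s))) :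
    ∀ s : Fin t,
      ∃ f : ↥(stdDelta F A 𝒜 I H (is s)) →ₗ[F]
        (↥(Vs (s + 1)) ⧸ Submodule.comap (Vs (s + 1)).subtype (Vs s)),
      Function.Bijective f ∧
      IsSuperHom F A 𝒜 ↥(stdDelta F A 𝒜 I H (is s))
        (↥(Vs (s + 1)) ⧸ Submodule.comap (Vs (s + 1)).subtype (Vs s))
        (grDelta F A 𝒜 I H (is s))
        (fun ε => {q | ∃ z : V, z ∈ 𝒱 ε ∧ ∃ hz : z ∈ Vs (s + 1),
          Submodule.Quotient.mk (⟨z, hz⟩ : ↥(Vs (s + 1))) = q})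
        (pv s) f := by
  have hsucc : ∀ s : Fin t, Vs (s + 1) = Vs s ⊔ Submodule.span A {v s} := fun s => by
    rw [hVs, hVs, Submodule.span_image_lt_succ]
  have hmem : ∀ s : Fin t, v s ∈ Vs (s + 1) := fun s => by
    rw [hsucc s]
    exact Submodule.mem_sup_right (Submodule.mem_span_singleton_self _)
  choose f hf_surj hf_super using fun s : Fin t =>
    H.exists_surjective_isSuperHom_stdDelta 𝒱 hact (hv_homog s) (hmem s) (hsucc s).le
      (h2 s).1 (h2 s).2
  have hmono : ∀ n, Vs n ≤ Vs (n + 1) := fun n => by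
    rw [hVs, hVs]
    exact Submodule.span_mono (Set.image_mono fun r (hr : (r : ℕ) < n) => Nat.lt_succ_of_lt hr)
  have hsum := Submodule.sum_finrank_subquotient_eq_finrank F Vs hmono (by simp [hVs]) t
  rw [h1, (Submodule.topEquiv.restrictScalars F).finrank_eq, h3] at hsum
  have := H.finiteDimensional
  exact fun s => ⟨f s, bijective_of_surjective_of_sum_finrank_eq
    (D := fun s => stdDelta F A 𝒜 I H (is s)) f hf_surj hsum s, hf_super s⟩
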